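/- For any n-qubit unitary U and T ⊆ [n] with |T| = k, the distance from U to the set of junta unitaries on T satisfies dist(U, J_T) = √(1 − ‖Tr_{T̄}U‖_*/2ⁿ), where ‖·‖_* is the nuclear norm and J_T is the set of unitaries of the form V_T ⊗ I_{T̄}. -/

import Mathlib

open scoped Matrix

open scoped Kronecker

/-- Partial trace over the second tensor factor. -/
noncomputable def ptr {α β : Type*} [Fintype β] (U : Matrix (α × β) (α × β) ℂ) :
    Matrix α α ℂ :=
  Matrix.of fun a a' => ∑ b : β, U (a, b) (a', b)

/-- The nuclear norm (sum of singular values) of a square complex matrix. -/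
noncomputable def nuclearNorm {ι : Type*} [Fintype ι] [DecidableEq ι]
    (A : Matrix ι ι ℂ) : ℝ :=
  ∑ i, Real.sqrt ((Matrix.isHermitian_conjTranspose_mul_self A).eigenvalues i)

/-!
Write `A = ptr U`. Since `tr(Uᴴ (V ⊗ 1)) = tr(Aᴴ V)`, the claim is that the maximum of
`|tr(Aᴴ V)|` over unitaries `V` is the nuclear norm of `A`. Let the unitary `P` diagonalize `AᴴA`:
the columns of `M = A P` are then orthogonal, with norms the singular values `σⱼ` of `A`, and
`tr(Aᴴ V) = tr(Mᴴ (V P))`. Cauchy–Schwarz, column by column, bounds this by `∑ σⱼ`, with equality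
when the columns of `V P` form an orthonormal basis extending the normalized nonzero columns of `M`.
-/

open scoped InnerProductSpace

theorem exists_orthonormalBasis_inner_eq_norm {ι 𝕜 E : Type*} [RCLike 𝕜]
    [NormedAddCommGroup E] [InnerProductSpace 𝕜 E] [FiniteDimensional 𝕜 E] [Fintype ι]
    (hcard : Module.finrank 𝕜 E = Fintype.card ι) {v : ι → E}
    (hv : Pairwise fun i j => ⟪v i, v j⟫_𝕜 = 0) :
    ∃ b : OrthonormalBasis ι 𝕜 E, ∀ i, ⟪v i, b i⟫_𝕜 = ‖v i‖ := by
  -- Gram–Schmidt needs an ordered index type, so we run it over `Fin (card ι)`.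
  let e := Fintype.equivFin ι
  have hcard' : Module.finrank 𝕜 E = Fintype.card (Fin (Fintype.card ι)) := by simpa using hcard
  refine ⟨(InnerProductSpace.gramSchmidtOrthonormalBasis hcard' (v ∘ e.symm)).reindex e.symm,
    fun i => ?_⟩
  by_cases hi : v i = 0
  · simp [hi]
  have hb := InnerProductSpace.gramSchmidtOrthonormalBasis_apply_of_orthogonal hcard'
    (hv.comp_of_injective e.symm.injective) (i := e i) (by simpa using hi)
  rw [OrthonormalBasis.reindex_apply, Equiv.symm_symm]
  simp only [Equiv.symm_apply_apply] at hb
  rw [Function.comp_def, hb, inner_smul_right, inner_self_eq_norm_sq_to_K]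
  field_simp

namespace Matrix

variable {𝕜 m n : Type*} [RCLike 𝕜] [Fintype m]

noncomputable def eucCol (A : Matrix m n 𝕜) (j : n) : EuclideanSpace 𝕜 m :=
  WithLp.toLp 2 (A.col j)

theorem inner_eucCol (A B : Matrix m n 𝕜) (i j : n) :
    ⟪A.eucCol i, B.eucCol j⟫_𝕜 = (Aᴴ * B) i j := by
  simp only [eucCol, EuclideanSpace.inner_toLp_toLp, mul_apply, dotProduct, col_apply,
    conjTranspose_apply, Pi.star_apply, mul_comm]

theorem norm_eucCol_of_mem_unitaryGroup [Fintype n] [DecidableEq n] {Q : Matrix n n 𝕜}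
    (hQ : Q ∈ unitaryGroup n 𝕜) (j : n) : ‖Q.eucCol j‖ = 1 := by
  have h : ⟪Q.eucCol j, Q.eucCol j⟫_𝕜 = 1 := by
    rw [inner_eucCol, ← star_eq_conjTranspose, mem_unitaryGroup_iff'.mp hQ, one_apply_eq]
  have hsq : ‖Q.eucCol j‖ ^ 2 = 1 := by rw [@norm_sq_eq_re_inner 𝕜, h, RCLike.one_re]
  exact (pow_eq_one_iff_of_nonneg (norm_nonneg _) two_ne_zero).mp hsq

theorem norm_trace_conjTranspose_mul_le [Fintype n] (A B : Matrix m n 𝕜) :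
    ‖trace (Aᴴ * B)‖ ≤ ∑ j, ‖A.eucCol j‖ * ‖B.eucCol j‖ := by
  simp only [trace, diag, ← inner_eucCol]
  exact (norm_sum_le _ _).trans (Finset.sum_le_sum fun j _ => norm_inner_le_norm _ _)

theorem trace_conjTranspose_mul_eq_of_mem_unitaryGroup [Fintype n] [DecidableEq n]
    (A B : Matrix m n 𝕜) {P : Matrix n n 𝕜} (hP : P ∈ unitaryGroup n 𝕜) :
    trace (Aᴴ * B) = trace ((A * P)ᴴ * (B * P)) := by
  rw [conjTranspose_mul, Matrix.mul_assoc, ← Matrix.mul_assoc Aᴴ, ← Matrix.mul_assoc,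
    trace_mul_cycle, ← star_eq_conjTranspose, mem_unitaryGroup_iff.mp hP, Matrix.one_mul]

theorem exists_mem_unitaryGroup_diag_conjTranspose_mul_eq_norm [Fintype n] [DecidableEq n]
    {M : Matrix n n 𝕜} (hM : Pairwise fun i j => ⟪M.eucCol i, M.eucCol j⟫_𝕜 = 0) :
    ∃ W ∈ unitaryGroup n 𝕜, ∀ j, (Mᴴ * W) j j = ‖M.eucCol j‖ := by
  obtain ⟨b, hb⟩ := exists_orthonormalBasis_inner_eq_norm finrank_euclideanSpace hM
  exact ⟨_, (EuclideanSpace.basisFun n 𝕜).toMatrix_orthonormalBasis_mem_unitary b,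
    fun j => (inner_eucCol _ _ j j).symm.trans (hb j)⟩

section SingularValues

variable [Fintype n] [DecidableEq n] (A : Matrix m n 𝕜)

noncomputable def rightSingularVectors : Matrix n n 𝕜 :=
  (isHermitian_conjTranspose_mul_self A).eigenvectorUnitary

noncomputable def singularValue (j : n) : ℝ :=
  √((isHermitian_conjTranspose_mul_self A).eigenvalues j)

theorem rightSingularVectors_mem_unitaryGroup : A.rightSingularVectors ∈ unitaryGroup n 𝕜 :=
  (isHermitian_conjTranspose_mul_self A).eigenvectorUnitary.2

theorem inner_eucCol_mul_rightSingularVectors (i j : n) :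
    ⟪(A * A.rightSingularVectors).eucCol i, (A * A.rightSingularVectors).eucCol j⟫_𝕜 =
      diagonal (RCLike.ofReal ∘ (isHermitian_conjTranspose_mul_self A).eigenvalues) i j := by
  have := (isHermitian_conjTranspose_mul_self A).conjStarAlgAut_star_eigenvectorUnitary
  rw [Unitary.conjStarAlgAut_star_apply] at this
  rw [inner_eucCol, ← this]
  simp [rightSingularVectors, conjTranspose_mul, Matrix.mul_assoc, star_eq_conjTranspose]

theorem pairwise_inner_eucCol_mul_rightSingularVectors :
    Pairwise fun i j =>
      ⟪(A * A.rightSingularVectors).eucCol i, (A * A.rightSingularVectors).eucCol j⟫_𝕜 = 0 :=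
  fun i j hij => (inner_eucCol_mul_rightSingularVectors A i j).trans (diagonal_apply_ne _ hij)

theorem norm_eucCol_mul_rightSingularVectors (j : n) :
    ‖(A * A.rightSingularVectors).eucCol j‖ = A.singularValue j := by
  rw [singularValue, ← Real.sqrt_sq (norm_nonneg _), @norm_sq_eq_re_inner 𝕜,
    inner_eucCol_mul_rightSingularVectors, diagonal_apply_eq, Function.comp_apply,
    RCLike.ofReal_re]

end SingularValues

end Matrix

open Matrix

section NuclearNorm

variable {n : Type*} [Fintype n] [DecidableEq n]

theorem nuclearNorm_eq_sum_singularValue (A : Matrix n n ℂ) :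
    nuclearNorm A = ∑ j, A.singularValue j := rfl

theorem nuclearNorm_nonneg (A : Matrix n n ℂ) : 0 ≤ nuclearNorm A :=
  Finset.sum_nonneg fun _ _ => Real.sqrt_nonneg _

theorem norm_trace_conjTranspose_mul_le_nuclearNorm (A : Matrix n n ℂ) {V : Matrix n n ℂ}
    (hV : V ∈ unitaryGroup n ℂ) : ‖trace (Aᴴ * V)‖ ≤ nuclearNorm A := by
  have hP := A.rightSingularVectors_mem_unitaryGroup
  rw [trace_conjTranspose_mul_eq_of_mem_unitaryGroup A V hP]
  refine (norm_trace_conjTranspose_mul_le _ _).trans_eq ?_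
  simp only [norm_eucCol_of_mem_unitaryGroup (mul_mem hV hP), mul_one,
    norm_eucCol_mul_rightSingularVectors, nuclearNorm_eq_sum_singularValue]

theorem exists_trace_conjTranspose_mul_eq_nuclearNorm (A : Matrix n n ℂ) :
    ∃ V ∈ unitaryGroup n ℂ, trace (Aᴴ * V) = nuclearNorm A := by
  have hP := A.rightSingularVectors_mem_unitaryGroup
  obtain ⟨W, hW, hWdiag⟩ :=
    exists_mem_unitaryGroup_diag_conjTranspose_mul_eq_norm
      (pairwise_inner_eucCol_mul_rightSingularVectors A)
  refine ⟨W * star A.rightSingularVectors, mul_mem hW (Unitary.star_mem hP), ?_⟩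
  rw [trace_conjTranspose_mul_eq_of_mem_unitaryGroup A _ hP, Matrix.mul_assoc,
    mem_unitaryGroup_iff'.mp hP, Matrix.mul_one, trace, nuclearNorm_eq_sum_singularValue]
  simp only [diag_apply, hWdiag, norm_eucCol_mul_rightSingularVectors, Complex.ofReal_sum]
  rfl

end NuclearNorm

theorem trace_conjTranspose_mul_kronecker_one {α β : Type*} [Fintype α] [Fintype β]
    [DecidableEq β] (U : Matrix (α × β) (α × β) ℂ) (V : Matrix α α ℂ) :
    trace (Uᴴ * (V ⊗ₖ (1 : Matrix β β ℂ))) = trace ((ptr U)ᴴ * V) := by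
  simp only [trace, diag, mul_apply, conjTranspose_apply, kroneckerMap_apply, ptr, of_apply,
    one_apply, star_sum, Fintype.sum_prod_type, mul_ite, mul_one, mul_zero,
    Finset.sum_ite_eq', Finset.mem_univ, if_true, Finset.sum_mul]
  exact Finset.sum_congr rfl fun a _ => Finset.sum_comm

theorem stmt13_general (n : ℕ) (T : Finset (Fin n))
    (U : Matrix ((↥T → Fin 2) × (↥Tᶜ → Fin 2)) ((↥T → Fin 2) × (↥Tᶜ → Fin 2)) ℂ) :
    sInf {r : ℝ | ∃ VT ∈ Matrix.unitaryGroup (↥T → Fin 2) ℂ,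
        r = Real.sqrt (1 - ‖(Matrix.trace
              (Uᴴ * (VT ⊗ₖ (1 : Matrix (↥Tᶜ → Fin 2) (↥Tᶜ → Fin 2) ℂ))))‖ / (2 ^ n : ℝ))}
      = Real.sqrt (1 - nuclearNorm (ptr U) / (2 ^ n : ℝ)) := by
  obtain ⟨V₀, hV₀, hV₀_trace⟩ := exists_trace_conjTranspose_mul_eq_nuclearNorm (ptr U)
  refine IsLeast.csInf_eq ⟨⟨V₀, hV₀, ?_⟩, ?_⟩
  · rw [trace_conjTranspose_mul_kronecker_one, hV₀_trace, Complex.norm_real,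
      Real.norm_of_nonneg (nuclearNorm_nonneg _)]
  · rintro r ⟨V, hV, rfl⟩
    rw [trace_conjTranspose_mul_kronecker_one]
    gcongr
    exact norm_trace_conjTranspose_mul_le_nuclearNorm _ hV

theorem stmt13 (n k : ℕ) (T : Finset (Fin n)) (hT : T.card = k)
    (U : Matrix ((↥T → Fin 2) × (↥Tᶜ → Fin 2)) ((↥T → Fin 2) × (↥Tᶜ → Fin 2)) ℂ)
    (hU : U ∈ Matrix.unitaryGroup ((↥T → Fin 2) × (↥Tᶜ → Fin 2)) ℂ) :
    sInf {r : ℝ | ∃ VT ∈ Matrix.unitaryGroup (↥T → Fin 2) ℂ,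
        r = Real.sqrt (1 - ‖(Matrix.trace
              (Uᴴ * (VT ⊗ₖ (1 : Matrix (↥Tᶜ → Fin 2) (↥Tᶜ → Fin 2) ℂ))))‖ / (2 ^ n : ℝ))}
      = Real.sqrt (1 - nuclearNorm (ptr U) / (2 ^ n : ℝ)) :=
  stmt13_general n T U
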